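/- arXiv:1005.3364 — 11 statements merged into one kernel-verified Lean document; each statement's English description precedes it below -/
import Mathlib

section
/- Lifting identity for the balancing of the master graph at the nodes E_{i_j}: Let 2 ≤ j ≤ n−1 and let a, b ∈ ℤ satisfy a·i_j + b·g_{j−1} = g_j. Define v ∈ ℤ^{n+1} by v_0 = 0, v_k = a·i_k/g_{j−1} for 1 ≤ k ≤ j−1, and v_k = −b for j ≤ k ≤ n. Then g_j·E_{i_{j−1}} = (g_j − a·(i_j − i_{j−1}))·E_{i_j} + g_{j−1}·(i_j − i_{j−1})·v, and the coefficient g_{j−1}·(i_j − i_{j−1})/g_j of v is a positive integer. -/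
/-- Lifting identity for the balancing of the master graph at the nodes
`E_{i_j}`.  For `2 ≤ j ≤ n-1` and `a, b ∈ ℤ` with `a·i_j + b·g_{j-1} = g_j`, setting
`v = (0, a·i_1/g_{j-1}, …, a·i_{j-1}/g_{j-1}, -b, …, -b)`, one has
`g_j·E_{i_{j-1}} = (g_j − a·(i_j − i_{j-1}))·E_{i_j} + g_{j-1}·(i_j − i_{j-1})·v`
(coordinatewise), and the coefficient `g_{j-1}·(i_j − i_{j-1})/g_j` of `v` is a
positive integer. -/
theorem master_graph_balancing_at_E_lift
    (n : ℕ) (hn : 4 ≤ n) (i : ℕ → ℤ)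
    (hi0 : i 0 = 0)
    (hmono : ∀ k, k < n → i k < i (k + 1))
    (hgcd : Finset.gcd (Finset.Icc 1 n) i = 1)
    (j : ℕ) (hj2 : 2 ≤ j) (hjn : j ≤ n - 1)
    (a b : ℤ)
    (hab : a * i j + b * Finset.gcd (Finset.Icc 1 (j - 1)) i
            = Finset.gcd (Finset.Icc 1 j) i)
    (v : ℕ → ℤ)
    (hv : v = fun k => if k < j then a * i k / Finset.gcd (Finset.Icc 1 (j - 1)) i else -b) :
    (∀ k ≤ n,
      Finset.gcd (Finset.Icc 1 j) i * (if k < j - 1 then i k else i (j - 1))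
        = (Finset.gcd (Finset.Icc 1 j) i - a * (i j - i (j - 1)))
              * (if k < j then i k else i j)
          + Finset.gcd (Finset.Icc 1 (j - 1)) i * (i j - i (j - 1)) * v k)
    ∧ Finset.gcd (Finset.Icc 1 j) i ∣
        Finset.gcd (Finset.Icc 1 (j - 1)) i * (i j - i (j - 1))
    ∧ 0 < Finset.gcd (Finset.Icc 1 (j - 1)) i * (i j - i (j - 1))
            / Finset.gcd (Finset.Icc 1 j) i := by
  set g' := Finset.gcd (Finset.Icc 1 (j - 1)) i with hg'
  set g := Finset.gcd (Finset.Icc 1 j) i with hg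
  -- positivity of i k for 1 ≤ k ≤ n
  have hipos : ∀ k, 1 ≤ k → k ≤ n → 0 < i k := by
    intro k hk1 hkn
    have : ∀ m, m ≤ n → 0 ≤ i m := by
      intro m hm
      induction m with
      | zero => simp [hi0]
      | succ p ih =>
        have := hmono p (by omega)
        have := ih (by omega)
        omega
    have h1 : 0 ≤ i (k - 1) := this (k - 1) (by omega)
    have h2 := hmono (k - 1) (by omega)
    rw [Nat.sub_add_cancel hk1] at h2
    omega
  have hd : i (j - 1) < i j := by
    have := hmono (j - 1) (by omega)
    rwa [Nat.sub_add_cancel (by omega)] at this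
  -- nonnegativity of gcds
  have habs : ∀ s : Finset ℕ, 0 ≤ Finset.gcd s i := by
    intro s
    have : |Finset.gcd s i| = Finset.gcd s i := by
      rw [Int.abs_eq_normalize, Finset.normalize_gcd]
    rw [← this]; exact abs_nonneg _
  have hg'dvd : ∀ k, 1 ≤ k → k ≤ j - 1 → g' ∣ i k := by
    intro k h1 h2
    exact Finset.gcd_dvd (Finset.mem_Icc.mpr ⟨h1, h2⟩)
  have hg'pos : 0 < g' := by
    rcases lt_or_eq_of_le (habs (Finset.Icc 1 (j - 1))) with h | h
    · exact h
    · exfalso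
      have h1 : g' ∣ i 1 := hg'dvd 1 le_rfl (by omega)
      rw [hg', ← h] at h1
      have h2 : i 1 = 0 := zero_dvd_iff.mp h1
      have := hipos 1 le_rfl (by omega)
      omega
  have hgdvdg' : g ∣ g' := by
    apply Finset.dvd_gcd
    intro k hk
    rw [Finset.mem_Icc] at hk
    exact Finset.gcd_dvd (Finset.mem_Icc.mpr ⟨hk.1, by omega⟩)
  have hgpos : 0 < g := by
    rcases lt_or_eq_of_le (habs (Finset.Icc 1 j)) with h | h
    · exact h
    · exfalso
      have h1 : g ∣ i j := Finset.gcd_dvd (Finset.mem_Icc.mpr ⟨by omega, le_rfl⟩)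
      rw [hg, ← h] at h1
      have h2 : i j = 0 := zero_dvd_iff.mp h1
      have := hipos j (by omega) (by omega)
      omega
  have hg'ne : g' ≠ 0 := hg'pos.ne'
  refine ⟨?_, dvd_mul_of_dvd_left hgdvdg' _, ?_⟩
  · intro k hk
    subst hv
    by_cases hk1 : k < j - 1
    · have hk2 : k < j := by omega
      simp only [if_pos hk1, if_pos hk2]
      by_cases hk0 : k = 0
      · subst hk0; simp [hi0]
      · obtain ⟨c, hc⟩ := hg'dvd k (by omega) (by omega)
        have hdiv : a * i k / g' = a * c := by
          rw [hc, mul_comm g' c, ← mul_assoc, Int.mul_ediv_cancel _ hg'ne]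
        rw [hdiv, hc]
        ring
    · by_cases hk2 : k < j
      · have hk3 : k = j - 1 := by omega
        subst hk3
        simp only [if_neg hk1, if_pos hk2]
        obtain ⟨c, hc⟩ := hg'dvd (j - 1) (by omega) le_rfl
        have hdiv : a * i (j - 1) / g' = a * c := by
          rw [hc, mul_comm g' c, ← mul_assoc, Int.mul_ediv_cancel _ hg'ne]
        rw [hdiv, hc]
        ring
      · simp only [if_neg hk1, if_neg hk2]
        linear_combination (i j - i (j - 1)) * hab
  · obtain ⟨c, hc⟩ := hgdvdg'
    have hcpos : 0 < c := by
      have h0 : 0 < g * c := by rw [← hc]; exact hg'pos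
      by_contra h
      push_neg at h
      nlinarith
    have hq : g' * (i j - i (j - 1)) / g = c * (i j - i (j - 1)) := by
      rw [hc, mul_comm g c, mul_right_comm, Int.mul_ediv_cancel _ hgpos.ne']
    rw [hq]
    exact mul_pos hcpos (by omega)
end

section
/- Primitivity of the lattice spanned by E_{i_j}/g_j and v: Let 2 ≤ j ≤ n−1 and let a, b ∈ ℤ satisfy a·i_j + b·g_{j−1} = g_j. Define v ∈ ℤ^{n+1} by v_0 = 0, v_k = a·i_k/g_{j−1} for 1 ≤ k ≤ j−1, and v_k = −b for j ≤ k ≤ n. Then every nonzero 2×2 minor of the 2×(n+1) integer matrix with rows E_{i_j}/g_j and v equals ±i_k/g_{j−1} for some 1 ≤ k ≤ j−1; in particular the gcd of all 2×2 minors equals 1, so ℤ·(E_{i_j}/g_j) + ℤ·v is a saturated (primitive) rank-2 sublattice of ℤ^{n+1}. -/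
/-!
Write `g = g_{j-1}`, `h = g_j`, `c_k = i_k / g`, `E = g / h` and `F = i_j / h`. Then
`E_{i_j}/h = (E c_0, …, E c_{j-1}, F, …, F)` and `v = (a c_0, …, a c_{j-1}, -b, …, -b)`, and the
Bézout relation turns into `a F + b E = 1`. So a 2×2 minor vanishes unless its two columns lie in
different blocks, in which case it is `±(E (-b) - F a) c_k = ∓c_k`. The gcd of the `c_k` is `1`,
hence so is the gcd of all minors, and a pair of integer vectors whose minors are coprime spans a
saturated lattice: if `m w = x u + y v`, then `m` divides `x` and `y` times every minor.
-/

open Finset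

section PairMinor

variable {ι : Type*}

def pairMinor (u v : ι → ℤ) (k k' : ι) : ℤ := u k * v k' - u k' * v k

lemma pairMinor_swap (u v : ι → ℤ) (k k' : ι) : pairMinor u v k' k = -pairMinor u v k k' := by
  unfold pairMinor; ring

lemma mul_pairMinor_of_add_eq_smul {u v w : ι → ℤ} {x y c : ℤ} (h : x • u + y • v = c • w)
    (k k' : ι) :
    x * pairMinor u v k k' = c * pairMinor w v k k' ∧
      y * pairMinor u v k k' = c * pairMinor u w k k' := by
  have hw : ∀ l, x * u l + y * v l = c * w l := fun l => by simpa using congrFun h l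
  unfold pairMinor
  exact ⟨by linear_combination v k' * hw k - v k * hw k',
    by linear_combination u k * hw k' - u k' * hw k⟩

lemma Finset.dvd_of_forall_dvd_mul_of_gcd_eq_one {α : Type*} {s : Finset α} {f : α → ℤ}
    (hf : s.gcd f = 1) {c x : ℤ} (h : ∀ p ∈ s, c ∣ x * f p) : c ∣ x := by
  have := Finset.dvd_gcd h
  rwa [Finset.gcd_mul_left, hf, mul_one, dvd_normalize_iff] at this

theorem mem_span_pair_of_smul_mem [Fintype ι] {u v : ι → ℤ}
    (h : univ.gcd (fun p : ι × ι => pairMinor u v p.1 p.2) = 1) {c : ℤ} (hc : c ≠ 0)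
    {w : ι → ℤ} (hw : c • w ∈ Submodule.span ℤ {u, v}) : w ∈ Submodule.span ℤ {u, v} := by
  obtain ⟨x, y, hxy⟩ := Submodule.mem_span_pair.mp hw
  have hcx : c ∣ x := Finset.dvd_of_forall_dvd_mul_of_gcd_eq_one h fun p _ =>
    ⟨_, (mul_pairMinor_of_add_eq_smul hxy p.1 p.2).1⟩
  have hcy : c ∣ y := Finset.dvd_of_forall_dvd_mul_of_gcd_eq_one h fun p _ =>
    ⟨_, (mul_pairMinor_of_add_eq_smul hxy p.1 p.2).2⟩
  obtain ⟨x', rfl⟩ := hcx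
  obtain ⟨y', rfl⟩ := hcy
  refine Submodule.mem_span_pair.mpr ⟨x', y', smul_right_injective _ hc ?_⟩
  simpa only [smul_add, mul_smul] using hxy

end PairMinor

section BlockVec

variable {ι : Type*} (P : ι → Prop) [DecidablePred P]

def blockVec (c : ι → ℤ) (p q : ℤ) : ι → ℤ := fun k => if P k then p * c k else q

variable {P} {c : ι → ℤ} {p q r s : ℤ} {k k' : ι}

lemma pairMinor_blockVec_of_iff (h : P k ↔ P k') :
    pairMinor (blockVec P c p q) (blockVec P c r s) k k' = 0 := by
  unfold pairMinor blockVec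
  by_cases hk : P k
  · simp only [hk, h.mp hk, if_true]; ring
  · simp only [hk, mt h.mpr hk, if_false]; ring

lemma pairMinor_blockVec_of_not (hk : P k) (hk' : ¬P k') :
    pairMinor (blockVec P c p q) (blockVec P c r s) k k' = (p * s - q * r) * c k := by
  unfold pairMinor blockVec
  simp only [hk, hk', if_true, if_false]; ring

lemma exists_pairMinor_blockVec_eq (hd : IsUnit (p * s - q * r))
    (h : pairMinor (blockVec P c p q) (blockVec P c r s) k k' ≠ 0) :
    ∃ t, P t ∧ (pairMinor (blockVec P c p q) (blockVec P c r s) k k' = c t ∨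
      pairMinor (blockVec P c p q) (blockVec P c r s) k k' = -c t) := by
  have hd' : ∀ t, (p * s - q * r) * c t = c t ∨ (p * s - q * r) * c t = -c t := fun t => by
    rcases Int.isUnit_iff.mp hd with hd | hd <;> simp [hd]
  by_cases hk : P k <;> by_cases hk' : P k'
  · exact absurd (pairMinor_blockVec_of_iff (iff_of_true hk hk')) h
  · exact ⟨k, hk, pairMinor_blockVec_of_not hk hk' ▸ hd' k⟩
  · refine ⟨k', hk', ?_⟩
    rw [pairMinor_swap, pairMinor_blockVec_of_not hk' hk]
    rcases hd' k' with e | e <;> simp [e]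
  · exact absurd (pairMinor_blockVec_of_iff (iff_of_false hk hk')) h

lemma gcd_pairMinor_blockVec_eq_one [Fintype ι] {κ : Type*} {t : Finset κ} {g : κ → ℤ}
    (hd : IsUnit (p * s - q * r)) (hk' : ¬P k') (hg : t.gcd g = 1)
    (ht : ∀ l ∈ t, ∃ k, P k ∧ c k = g l) :
    univ.gcd (fun x : ι × ι => pairMinor (blockVec P c p q) (blockVec P c r s) x.1 x.2) = 1 := by
  have hdvd : univ.gcd (fun x : ι × ι => pairMinor (blockVec P c p q) (blockVec P c r s) x.1 x.2)
      ∣ 1 := hg ▸ Finset.dvd_gcd fun l hl => by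
    obtain ⟨k, hk, hck⟩ := ht l hl
    have := Finset.gcd_dvd (f := fun x : ι × ι => pairMinor (blockVec P c p q)
      (blockVec P c r s) x.1 x.2) (mem_univ (k, k'))
    rw [pairMinor_blockVec_of_not hk hk', hck] at this
    exact (IsUnit.dvd_mul_left hd).mp this
  rw [← Finset.normalize_gcd]
  exact normalize_eq_one.mpr (isUnit_of_dvd_one hdvd)

lemma ite_ediv_eq_blockVec {f : ι → ℤ} {x G H E F : ℤ} (hf : ∀ k, P k → G ∣ f k)
    (hH : H ≠ 0) (hE : G = H * E) (hF : x = H * F) :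
    (fun k => (if P k then f k else x) / H) = blockVec P (fun k => f k / G) E F := by
  funext k
  simp only [blockVec]
  split_ifs with hk
  · obtain ⟨m, hm⟩ := hf k hk
    rcases eq_or_ne G 0 with hG | hG
    · simp [hm, hG]
    · rw [hm, Int.mul_ediv_cancel_left _ hG, hE, mul_assoc, Int.mul_ediv_cancel_left _ hH]
  · rw [hF, Int.mul_ediv_cancel_left _ hH]

lemma ite_mul_ediv_eq_blockVec {f : ι → ℤ} {G : ℤ} (hf : ∀ k, P k → G ∣ f k) (a y : ℤ) :
    (fun k => if P k then a * f k / G else y) = blockVec P (fun k => f k / G) a y := by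
  funext k
  simp only [blockVec]
  split_ifs with hk
  · exact Int.mul_ediv_assoc a (hf k hk)
  · rfl

end BlockVec

lemma Finset.gcd_Icc_one_dvd {f : ℕ → ℤ} (h0 : f 0 = 0) {m k : ℕ} (hk : k ≤ m) :
    (Icc 1 m).gcd f ∣ f k := by
  rcases k.eq_zero_or_pos with rfl | hk0
  · simp [h0]
  · exact Finset.gcd_dvd (mem_Icc.mpr ⟨hk0, hk⟩)

theorem primitivity_of_E_v_lattice_general
    (n : ℕ) (i : ℕ → ℤ)
    (hi0 : i 0 = 0)
    (hmono : ∀ k, k < n → i k < i (k + 1))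
    (j : ℕ) (hj2 : 2 ≤ j) (hjn : j ≤ n - 1)
    (a b : ℤ)
    (hab : a * i j + b * Finset.gcd (Finset.Icc 1 (j - 1)) i
            = Finset.gcd (Finset.Icc 1 j) i)
    (u v : Fin (n + 1) → ℤ)
    (hu : u = fun k : Fin (n + 1) => (if (k : ℕ) < j then i (k : ℕ) else i j)
                / Finset.gcd (Finset.Icc 1 j) i)
    (hv : v = fun k : Fin (n + 1) => if (k : ℕ) < j
                then a * i (k : ℕ) / Finset.gcd (Finset.Icc 1 (j - 1)) i else -b) :
    (∀ k k' : Fin (n + 1),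
        u k * v k' - u k' * v k ≠ 0 →
        ∃ t, 1 ≤ t ∧ t ≤ j - 1 ∧
          (u k * v k' - u k' * v k = i t / Finset.gcd (Finset.Icc 1 (j - 1)) i ∨
           u k * v k' - u k' * v k = -(i t / Finset.gcd (Finset.Icc 1 (j - 1)) i)))
    ∧ Finset.gcd Finset.univ
        (fun p : Fin (n + 1) × Fin (n + 1) => u p.1 * v p.2 - u p.2 * v p.1) = 1
    ∧ (∀ (c : ℤ) (w : Fin (n + 1) → ℤ), c ≠ 0 →
        c • w ∈ Submodule.span ℤ ({u, v} : Set (Fin (n + 1) → ℤ)) →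
        w ∈ Submodule.span ℤ ({u, v} : Set (Fin (n + 1) → ℤ))) := by
  set G := (Icc 1 (j - 1)).gcd i
  set H := (Icc 1 j).gcd i
  set P : Fin (n + 1) → Prop := fun k => (k : ℕ) < j
  have hGdvd : ∀ k, P k → G ∣ i k := fun k hk => Finset.gcd_Icc_one_dvd hi0 (by omega)
  have hi1 : i 1 ≠ 0 := by simpa [hi0] using (hmono 0 (by omega)).ne'
  obtain ⟨E, hE⟩ : H ∣ G := Finset.gcd_mono (Icc_subset_Icc_right (by omega))
  obtain ⟨F, hF⟩ : H ∣ i j := Finset.gcd_dvd (by simp; omega)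
  have hH : H ≠ 0 := fun h => hi1 (Finset.gcd_eq_zero_iff.mp h 1 (by simp; omega))
  have hdet : IsUnit (E * -b - F * a) := by
    have : E * -b - F * a = -1 :=
      mul_left_cancel₀ hH (by rw [hF, hE] at hab; linear_combination -hab)
    exact this ▸ isUnit_one.neg
  subst hu hv
  rw [ite_ediv_eq_blockVec hGdvd hH hE hF, ite_mul_ediv_eq_blockVec hGdvd]
  have hminors := gcd_pairMinor_blockVec_eq_one (P := P) (c := fun k => i k / G)
    (k' := ⟨j, by omega⟩) hdet (lt_irrefl j)
    (Finset.gcd_div_eq_one (s := Icc 1 (j - 1)) (by simp; omega) hi1)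
    fun l hl => ⟨⟨l, by simp at hl; omega⟩, show l < j by simp at hl; omega, rfl⟩
  refine ⟨fun k k' hne => ?_, hminors, fun c w hc => mem_span_pair_of_smul_mem hminors hc⟩
  change pairMinor _ _ k k' ≠ 0 at hne
  obtain ⟨t, ht, hmin⟩ := exists_pairMinor_blockVec_eq hdet hne
  have hct : i t / G ≠ 0 := fun h0 => hne (by rcases hmin with h' | h' <;> simp [h', h0])
  have ht0 : (t : ℕ) ≠ 0 := fun h => hct (by simp [h, hi0])
  exact ⟨t, by omega, by omega, hmin⟩

/-- Primitivity of the lattice spanned by `E_{i_j}/g_j` and `v`.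
Every nonzero 2×2 minor of the 2×(n+1) matrix with rows `E_{i_j}/g_j` and `v`
equals `±i_t/g_{j-1}` for some `1 ≤ t ≤ j-1`; the gcd of all 2×2 minors is `1`;
and `ℤ·(E_{i_j}/g_j) + ℤ·v` is a saturated rank-2 sublattice of `ℤ^{n+1}`. -/
theorem primitivity_of_E_v_lattice
    (n : ℕ) (hn : 4 ≤ n) (i : ℕ → ℤ)
    (hi0 : i 0 = 0)
    (hmono : ∀ k, k < n → i k < i (k + 1))
    (hgcd : Finset.gcd (Finset.Icc 1 n) i = 1)
    (j : ℕ) (hj2 : 2 ≤ j) (hjn : j ≤ n - 1)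
    (a b : ℤ)
    (hab : a * i j + b * Finset.gcd (Finset.Icc 1 (j - 1)) i
            = Finset.gcd (Finset.Icc 1 j) i)
    (u v : Fin (n + 1) → ℤ)
    (hu : u = fun k : Fin (n + 1) => (if (k : ℕ) < j then i (k : ℕ) else i j)
                / Finset.gcd (Finset.Icc 1 j) i)
    (hv : v = fun k : Fin (n + 1) => if (k : ℕ) < j
                then a * i (k : ℕ) / Finset.gcd (Finset.Icc 1 (j - 1)) i else -b) :
    (∀ k k' : Fin (n + 1),
        u k * v k' - u k' * v k ≠ 0 →
        ∃ t, 1 ≤ t ∧ t ≤ j - 1 ∧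
          (u k * v k' - u k' * v k = i t / Finset.gcd (Finset.Icc 1 (j - 1)) i ∨
           u k * v k' - u k' * v k = -(i t / Finset.gcd (Finset.Icc 1 (j - 1)) i)))
    ∧ Finset.gcd Finset.univ
        (fun p : Fin (n + 1) × Fin (n + 1) => u p.1 * v p.2 - u p.2 * v p.1) = 1
    ∧ (∀ (c : ℤ) (w : Fin (n + 1) → ℤ), c ≠ 0 →
        c • w ∈ Submodule.span ℤ ({u, v} : Set (Fin (n + 1) → ℤ)) →
        w ∈ Submodule.span ℤ ({u, v} : Set (Fin (n + 1) → ℤ))) :=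
  primitivity_of_E_v_lattice_general n i hi0 hmono j hj2 hjn a b hab u v hu hv
end

section
/- Adjacent exceptional cones meet along the common ray: For every 1 ≤ j ≤ n−2 and every integer l with i_j ≤ l ≤ i_{j+1} − 2, one has ℝ≥0⟨[E_l], [E_{l+1}]⟩ ∩ ℝ≥0⟨[E_{l+1}], [E_{l+2}]⟩ = ℝ≥0·[E_{l+1}]. -/
/-- The divisorial valuation ray `[E_l] = ∑_{k : i_k < l} i_k e_k + l·∑_{k : i_k ≥ l} e_k`. -/
noncomputable def El (n : ℕ) (i : ℕ → ℤ) (l : ℤ) : Fin (n + 1) → ℝ :=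
  fun k => if i (k : ℕ) < l then (i (k : ℕ) : ℝ) else (l : ℝ)

/-- The cone `ℝ≥0⟨x, y⟩ = {αx + βy : α, β ≥ 0}`. -/
def cone2 {m : ℕ} (x y : Fin m → ℝ) : Set (Fin m → ℝ) :=
  {z | ∃ α β : ℝ, 0 ≤ α ∧ 0 ≤ β ∧ z = α • x + β • y}

/-- The ray `ℝ≥0·x = {αx : α ≥ 0}`. -/
def ray {m : ℕ} (x : Fin m → ℝ) : Set (Fin m → ℝ) :=
  {z | ∃ α : ℝ, 0 ≤ α ∧ z = α • x}

/-- Adjacent exceptional cones meet along the common ray: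
for `1 ≤ j ≤ n-2` and `i_j ≤ l ≤ i_{j+1} - 2`,
`ℝ≥0⟨[E_l], [E_{l+1}]⟩ ∩ ℝ≥0⟨[E_{l+1}], [E_{l+2}]⟩ = ℝ≥0·[E_{l+1}]`. -/
theorem adjacent_exceptional_cones_meet_along_ray
    (n : ℕ) (hn : 4 ≤ n) (i : ℕ → ℤ)
    (hi0 : i 0 = 0)
    (hmono : ∀ k, k < n → i k < i (k + 1))
    (hgcd : Finset.gcd (Finset.Icc 1 n) i = 1)
    (j : ℕ) (hj1 : 1 ≤ j) (hjn : j ≤ n - 2)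
    (l : ℤ) (hl1 : i j ≤ l) (hl2 : l ≤ i (j + 1) - 2) :
    cone2 (El n i l) (El n i (l + 1)) ∩ cone2 (El n i (l + 1)) (El n i (l + 2))
      = ray (El n i (l + 1)) := by
  have key : ∀ a b : ℕ, a ≤ b → b ≤ n → i a ≤ i b := by
    intro a b hab hbn
    induction b with
    | zero =>
      have : a = 0 := by omega
      subst this; exact le_rfl
    | succ b ih =>
      rcases Nat.lt_or_ge a (b + 1) with h | h
      · have h1 := hmono b (by omega)
        have h2 := ih (by omega) (by omega)
        omega
      · have : a = b + 1 := by omega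
        subst this; exact le_rfl
  have hjlt : j < n + 1 := by omega
  have hij_pos : 0 < i j := by
    have h01 : i 0 < i 1 := by simpa using hmono 0 (by omega)
    have h1j := key 1 j hj1 (by omega)
    omega
  have hin : l + 2 ≤ i n := by
    have := key (j + 1) n (by omega) le_rfl
    omega
  have hEj : ∀ m : ℤ, l ≤ m → El n i m ⟨j, hjlt⟩ = (i j : ℝ) := by
    intro m hm
    simp only [El]
    split_ifs with h
    · rfl
    · have : i j = m := le_antisymm (le_trans hl1 hm) (not_lt.mp h)
      rw [this]
  have hEn : ∀ m : ℤ, m ≤ l + 2 → El n i m ⟨n, by omega⟩ = (m : ℝ) := by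
    intro m hm
    simp only [El]
    rw [if_neg (by omega)]
  ext z
  simp only [Set.mem_inter_iff, cone2, ray, Set.mem_setOf_eq]
  constructor
  · rintro ⟨⟨α, β, hα, hβ, hz1⟩, γ, δ, hγ, hδ, hz2⟩
    have e1 := congrFun (hz1.symm.trans hz2) ⟨j, hjlt⟩
    have e2 := congrFun (hz1.symm.trans hz2) (⟨n, by omega⟩ : Fin (n + 1))
    simp only [Pi.add_apply, Pi.smul_apply, smul_eq_mul,
      hEj l le_rfl, hEj (l + 1) (by omega), hEj (l + 2) (by omega),
      hEn l (by omega), hEn (l + 1) (by omega), hEn (l + 2) le_rfl] at e1 e2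
    have hijne : (i j : ℝ) ≠ 0 := by
      exact_mod_cast (by omega : i j ≠ 0)
    have h1 : α + β = γ + δ :=
      mul_right_cancel₀ hijne (by linear_combination e1)
    push_cast at e2
    have h2 : β = γ + 2 * δ := by linear_combination e2 - (l : ℝ) * h1
    have hδ0 : δ = 0 := by linarith
    have hα0 : α = 0 := by linarith
    refine ⟨γ, hγ, ?_⟩
    rw [hz2, hδ0]
    simp
  · rintro ⟨α, hα, rfl⟩
    exact ⟨⟨0, α, le_rfl, hα, by simp⟩, α, 0, hα, le_rfl, by simp⟩
end

section
/- Collapsing of intermediate exceptional rays between consecutive E-nodes: For every 1 ≤ j ≤ n−2 and every integer l with i_j ≤ l ≤ i_{j+1}, one has (i_{j+1} − i_j)·[E_l] = (i_{j+1} − l)·[E_{i_j}] + (l − i_j)·[E_{i_{j+1}}]; consequently the cone generated by the set {[E_l] : i_j ≤ l ≤ i_{j+1}} equals ℝ≥0⟨[E_{i_j}], [E_{i_{j+1}}]⟩. -/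
/-- The cone generated by a set `S`: all finite nonnegative combinations of elements of `S`. -/
def coneGen {m : ℕ} (S : Set (Fin m → ℝ)) : Set (Fin m → ℝ) :=
  {z | ∃ (F : Finset (Fin m → ℝ)) (c : (Fin m → ℝ) → ℝ),
        ↑F ⊆ S ∧ (∀ w ∈ F, 0 ≤ c w) ∧ z = ∑ w ∈ F, c w • w}

/-! Coordinatewise `[E_l]_k = min(i_k, l)`, which is affine in `l` on `[i_j, i_{j+1}]` because,
by monotonicity, no `i_k` lies strictly between `i_j` and `i_{j+1}`; this is the identity. Dividing
by `i_{j+1} - i_j > 0` puts every intermediate ray in `ℝ≥0⟨[E_{i_j}], [E_{i_{j+1}}]⟩`, and the two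
endpoint rays are among the generators, so the two cones agree. -/

lemma sub_mul_min_eq_of_le_or_le {x a l b : ℝ} (hx : x ≤ a ∨ b ≤ x) (hal : a ≤ l)
    (hlb : l ≤ b) :
    (b - a) * min x l = (b - l) * min x a + (l - a) * min x b := by
  rcases hx with hxa | hbx
  · rw [min_eq_left hxa, min_eq_left (hxa.trans hal), min_eq_left (hxa.trans (hal.trans hlb))]
    ring
  · rw [min_eq_right (hlb.trans hbx), min_eq_right ((hal.trans hlb).trans hbx), min_eq_right hbx]
    ring

lemma El_apply (n : ℕ) (i : ℕ → ℤ) (l : ℤ) (k : Fin (n + 1)) :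
    El n i l k = min (i k : ℝ) l := by
  rw [El]
  split_ifs with h
  · exact (min_eq_left (by exact_mod_cast h.le)).symm
  · exact (min_eq_right (by exact_mod_cast not_lt.mp h)).symm

lemma sub_smul_El_eq {n : ℕ} {i : ℕ → ℤ} {a l b : ℤ}
    (hgap : ∀ k : Fin (n + 1), i k ≤ a ∨ b ≤ i k) (hal : a ≤ l) (hlb : l ≤ b) :
    ((b : ℝ) - a) • El n i l = ((b : ℝ) - l) • El n i a + ((l : ℝ) - a) • El n i b := by
  funext k
  simp only [Pi.add_apply, Pi.smul_apply, smul_eq_mul, El_apply]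
  exact sub_mul_min_eq_of_le_or_le (by exact_mod_cast hgap k) (by exact_mod_cast hal)
    (by exact_mod_cast hlb)

lemma le_or_le_of_monotoneOn_Iic {f : ℕ → ℤ} {n j k : ℕ} (hf : MonotoneOn f (Set.Iic n))
    (hj : j < n) (hk : k ≤ n) : f k ≤ f j ∨ f (j + 1) ≤ f k := by
  rcases le_or_gt k j with hkj | hjk
  · exact Or.inl (hf (Set.mem_Iic.mpr hk) (Set.mem_Iic.mpr hj.le) hkj)
  · exact Or.inr (hf (Set.mem_Iic.mpr hj) (Set.mem_Iic.mpr hk) hjk)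

section cone2

variable {m : ℕ} {x y z : Fin m → ℝ}

lemma zero_mem_cone2 : (0 : Fin m → ℝ) ∈ cone2 x y := ⟨0, 0, le_rfl, le_rfl, by simp⟩

lemma add_mem_cone2 {z w : Fin m → ℝ} (hz : z ∈ cone2 x y) (hw : w ∈ cone2 x y) :
    z + w ∈ cone2 x y := by
  obtain ⟨α, β, hα, hβ, rfl⟩ := hz
  obtain ⟨α', β', hα', hβ', rfl⟩ := hw
  refine ⟨α + α', β + β', add_nonneg hα hα', add_nonneg hβ hβ', ?_⟩
  simp only [add_smul]
  abel

lemma smul_mem_cone2 {c : ℝ} (hc : 0 ≤ c) (hz : z ∈ cone2 x y) : c • z ∈ cone2 x y := by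
  obtain ⟨α, β, hα, hβ, rfl⟩ := hz
  exact ⟨c * α, c * β, mul_nonneg hc hα, mul_nonneg hc hβ, by simp only [smul_add, smul_smul]⟩

lemma mem_cone2_of_sub_smul_eq {a l b : ℝ} (hab : a < b) (hal : a ≤ l) (hlb : l ≤ b)
    (h : (b - a) • z = (b - l) • x + (l - a) • y) : z ∈ cone2 x y := by
  have hba : 0 < b - a := sub_pos.mpr hab
  refine ⟨(b - l) / (b - a), (l - a) / (b - a), div_nonneg (sub_nonneg.mpr hlb) hba.le,
    div_nonneg (sub_nonneg.mpr hal) hba.le, ?_⟩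
  rw [div_eq_inv_mul, div_eq_inv_mul, mul_smul, mul_smul, ← smul_add, ← h, smul_smul,
    inv_mul_cancel₀ hba.ne', one_smul]

lemma coneGen_eq_cone2 {S : Set (Fin m → ℝ)} (hS : S ⊆ cone2 x y) (hx : x ∈ S) (hy : y ∈ S) :
    coneGen S = cone2 x y := by
  classical
  ext z
  constructor
  · rintro ⟨F, c, hFS, hc, rfl⟩
    exact Finset.sum_induction _ (· ∈ cone2 x y) (fun _ _ => add_mem_cone2) zero_mem_cone2
      fun w hw => smul_mem_cone2 (hc w hw) (hS (hFS hw))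
  · rintro ⟨α, β, hα, hβ, rfl⟩
    -- the coefficient function is written so as not to need a case split on `x = y`
    refine ⟨{x, y}, fun w => (if w = x then α else 0) + (if w = y then β else 0), ?_, ?_, ?_⟩
    · simpa [Set.insert_subset_iff] using ⟨hx, hy⟩
    · intro w _
      positivity
    · simp only [add_smul, ite_smul, zero_smul, Finset.sum_add_distrib, Finset.sum_ite_eq',
        Finset.mem_insert, Finset.mem_singleton, true_or, or_true, if_true]

end cone2

theorem collapsing_intermediate_E_rays_general
    (n : ℕ) (hn : 4 ≤ n) (i : ℕ → ℤ)
    (hmono : ∀ k, k < n → i k < i (k + 1))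
    (j : ℕ) (hjn : j ≤ n - 2) :
    (∀ l : ℤ, i j ≤ l → l ≤ i (j + 1) →
      ((i (j + 1) : ℝ) - (i j : ℝ)) • El n i l
        = ((i (j + 1) : ℝ) - (l : ℝ)) • El n i (i j)
          + ((l : ℝ) - (i j : ℝ)) • El n i (i (j + 1)))
    ∧ coneGen {z | ∃ l : ℤ, i j ≤ l ∧ l ≤ i (j + 1) ∧ z = El n i l}
        = cone2 (El n i (i j)) (El n i (i (j + 1))) := by
  have hj : j < n := by omega
  have hlt : i j < i (j + 1) := hmono j hj
  have hgap (k : Fin (n + 1)) : i k ≤ i j ∨ i (j + 1) ≤ i k :=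
    le_or_le_of_monotoneOn_Iic (strictMonoOn_Iic_of_lt_succ hmono).monotoneOn hj
      (Nat.lt_succ_iff.mp k.isLt)
  have interpolate (l : ℤ) (hjl : i j ≤ l) (hlj : l ≤ i (j + 1)) :=
    sub_smul_El_eq hgap hjl hlj
  refine ⟨interpolate, coneGen_eq_cone2 ?_ ⟨i j, le_rfl, hlt.le, rfl⟩
    ⟨i (j + 1), hlt.le, le_rfl, rfl⟩⟩
  rintro _ ⟨l, hjl, hlj, rfl⟩
  exact mem_cone2_of_sub_smul_eq (by exact_mod_cast hlt) (by exact_mod_cast hjl)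
    (by exact_mod_cast hlj) (interpolate l hjl hlj)

/-- Collapsing of intermediate exceptional rays between consecutive E-nodes:
for `1 ≤ j ≤ n-2` and `i_j ≤ l ≤ i_{j+1}`,
`(i_{j+1} − i_j)·[E_l] = (i_{j+1} − l)·[E_{i_j}] + (l − i_j)·[E_{i_{j+1}}]`; consequently
the cone generated by `{[E_l] : i_j ≤ l ≤ i_{j+1}}` equals `ℝ≥0⟨[E_{i_j}], [E_{i_{j+1}}]⟩`. -/
theorem collapsing_intermediate_E_rays
    (n : ℕ) (hn : 4 ≤ n) (i : ℕ → ℤ)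
    (hi0 : i 0 = 0)
    (hmono : ∀ k, k < n → i k < i (k + 1))
    (hgcd : Finset.gcd (Finset.Icc 1 n) i = 1)
    (j : ℕ) (hj1 : 1 ≤ j) (hjn : j ≤ n - 2) :
    (∀ l : ℤ, i j ≤ l → l ≤ i (j + 1) →
      ((i (j + 1) : ℝ) - (i j : ℝ)) • El n i l
        = ((i (j + 1) : ℝ) - (l : ℝ)) • El n i (i j)
          + ((l : ℝ) - (i j : ℝ)) • El n i (i (j + 1)))
    ∧ coneGen {z | ∃ l : ℤ, i j ≤ l ∧ l ≤ i (j + 1) ∧ z = El n i l}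
        = cone2 (El n i (i j)) (El n i (i (j + 1))) :=
  collapsing_intermediate_E_rays_general n hn i hmono j hjn
end

section
/- Collapsing of intermediate exceptional rays between consecutive h-nodes: For every 1 ≤ j ≤ n−1 and every integer l with i_j ≤ l ≤ i_{j+1}, one has (i_{j+1} − i_j)·[h_l] = (i_{j+1} − l)·[h_{i_j}] + (l − i_j)·[h_{i_{j+1}}]; consequently the cone generated by the set {[h_l] : i_j ≤ l ≤ i_{j+1}} equals ℝ≥0⟨[h_{i_j}], [h_{i_{j+1}}]⟩. -/
/-- The divisorial valuation ray `[h_l] = −l·∑_{k : i_k < l} e_k − ∑_{k : i_k ≥ l} i_k e_k`. -/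
noncomputable def Hl (n : ℕ) (i : ℕ → ℤ) (l : ℤ) : Fin (n + 1) → ℝ :=
  fun k => if i (k : ℕ) < l then (-l : ℝ) else (-(i (k : ℕ)) : ℝ)

/-!
Coordinatewise `[h_l]_k = -max l i_k`, and `l ↦ max l c` is affine on every interval `[a, b]`
whose interior avoids the kink `c`. Between consecutive nodes `i_j < i_{j+1}` no `i_k` lies
strictly inside, so `[h_l]` is the interpolation of `[h_{i_j}]` and `[h_{i_{j+1}}]` with
nonnegative weights, and the cone they span absorbs every intermediate ray.
-/

theorem sub_mul_max_eq_of_le_or_le {K : Type*} [CommRing K] [LinearOrder K] {a b c l : K}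
    (hc : c ≤ a ∨ b ≤ c) (hal : a ≤ l) (hlb : l ≤ b) :
    (b - a) * max l c = (b - l) * max a c + (l - a) * max b c := by
  rcases hc with hca | hbc
  · rw [max_eq_left (hca.trans hal), max_eq_left hca, max_eq_left (hca.trans (hal.trans hlb))]
    ring
  · rw [max_eq_right (hlb.trans hbc), max_eq_right ((hal.trans hlb).trans hbc), max_eq_right hbc]
    ring

theorem MonotoneOn.apply_le_or_apply_succ_le {β : Type*} [Preorder β] {f : ℕ → β} {n j k : ℕ}
    (hf : MonotoneOn f (Set.Iic n)) (hj : j < n) (hk : k ≤ n) :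
    f k ≤ f j ∨ f (j + 1) ≤ f k := by
  rcases le_or_gt k j with hkj | hjk
  · exact Or.inl (hf (Set.mem_Iic.2 hk) (Set.mem_Iic.2 hj.le) hkj)
  · exact Or.inr (hf (Set.mem_Iic.2 hj) (Set.mem_Iic.2 hk) hjk)

theorem Hl_apply (n : ℕ) (i : ℕ → ℤ) (l : ℤ) (k : Fin (n + 1)) :
    Hl n i l k = -max (l : ℝ) (i k) := by
  unfold Hl
  split_ifs with h
  · rw [max_eq_left (by exact_mod_cast h.le)]
  · rw [max_eq_right (by exact_mod_cast not_lt.1 h)]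

theorem sub_smul_Hl_eq {n : ℕ} {i : ℕ → ℤ} {a b l : ℤ}
    (hgap : ∀ k : Fin (n + 1), i k ≤ a ∨ b ≤ i k) (hal : a ≤ l) (hlb : l ≤ b) :
    ((b : ℝ) - a) • Hl n i l = ((b : ℝ) - l) • Hl n i a + ((l : ℝ) - a) • Hl n i b := by
  funext k
  have hk : ((i k : ℤ) : ℝ) ≤ a ∨ (b : ℝ) ≤ i k := by exact_mod_cast hgap k
  have := sub_mul_max_eq_of_le_or_le hk (Int.cast_le.2 hal) (Int.cast_le.2 hlb)
  simp only [Pi.add_apply, Pi.smul_apply, smul_eq_mul, Hl_apply]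
  linarith

section Cones

variable {m : ℕ} {S : Set (Fin m → ℝ)} {x y z : Fin m → ℝ}

theorem mem_cone2_of_smul_eq {d s t : ℝ} (hd : 0 < d) (hs : 0 ≤ s) (ht : 0 ≤ t)
    (h : d • z = s • x + t • y) : z ∈ cone2 x y := by
  refine ⟨s / d, t / d, div_nonneg hs hd.le, div_nonneg ht hd.le, ?_⟩
  rw [← inv_smul_smul₀ hd.ne' z, h, smul_add, smul_smul, smul_smul, inv_mul_eq_div,
    inv_mul_eq_div]

theorem coneGen_subset_cone2 (hS : S ⊆ cone2 x y) : coneGen S ⊆ cone2 x y := by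
  rintro _ ⟨F, c, hFS, hc, rfl⟩
  refine Finset.sum_induction _ (· ∈ cone2 x y) ?_ ⟨0, 0, le_rfl, le_rfl, by simp⟩ ?_
  · rintro _ _ ⟨a₁, b₁, ha₁, hb₁, rfl⟩ ⟨a₂, b₂, ha₂, hb₂, rfl⟩
    exact ⟨a₁ + a₂, b₁ + b₂, add_nonneg ha₁ ha₂, add_nonneg hb₁ hb₂, by
      rw [add_smul, add_smul]; abel⟩
  · intro w hw
    obtain ⟨a, b, ha, hb, hab⟩ := hS (hFS hw)
    exact ⟨c w * a, c w * b, mul_nonneg (hc w hw) ha, mul_nonneg (hc w hw) hb, by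
      rw [hab, smul_add, smul_smul, smul_smul]⟩

theorem cone2_subset_coneGen (hx : x ∈ S) (hy : y ∈ S) : cone2 x y ⊆ coneGen S := by
  classical
  rintro _ ⟨α, β, hα, hβ, rfl⟩
  -- Splitting the weights this way also covers the case `x = y`.
  refine ⟨{x, y}, fun w => (if w = x then α else 0) + (if w = y then β else 0), ?_, ?_, ?_⟩
  · simpa [Set.insert_subset_iff] using ⟨hx, hy⟩
  · intro w _
    dsimp only
    split_ifs <;> positivity
  · simp only [add_smul, ite_smul, zero_smul, Finset.sum_add_distrib, Finset.sum_ite_eq',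
      Finset.mem_insert, Finset.mem_singleton, true_or, or_true, if_true]

end Cones

theorem collapsing_intermediate_h_rays_general
    (n : ℕ) (i : ℕ → ℤ)
    (hmono : ∀ k, k < n → i k < i (k + 1))
    (j : ℕ) (hj1 : 1 ≤ j) (hjn : j ≤ n - 1) :
    (∀ l : ℤ, i j ≤ l → l ≤ i (j + 1) →
      ((i (j + 1) : ℝ) - (i j : ℝ)) • Hl n i l
        = ((i (j + 1) : ℝ) - (l : ℝ)) • Hl n i (i j)
          + ((l : ℝ) - (i j : ℝ)) • Hl n i (i (j + 1)))
    ∧ coneGen {z | ∃ l : ℤ, i j ≤ l ∧ l ≤ i (j + 1) ∧ z = Hl n i l}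
        = cone2 (Hl n i (i j)) (Hl n i (i (j + 1))) := by
  have hj : j < n := by omega
  have hij : i j < i (j + 1) := hmono j hj
  have hgap : ∀ k : Fin (n + 1), i k ≤ i j ∨ i (j + 1) ≤ i k := fun k =>
    (strictMonoOn_Iic_of_lt_succ hmono).monotoneOn.apply_le_or_apply_succ_le
      hj (Nat.lt_succ_iff.1 k.isLt)
  have key := fun l (hl : i j ≤ l) (hl' : l ≤ i (j + 1)) => sub_smul_Hl_eq hgap hl hl'
  refine ⟨key, (coneGen_subset_cone2 ?_).antisymm
    (cone2_subset_coneGen ⟨_, le_rfl, hij.le, rfl⟩ ⟨_, hij.le, le_rfl, rfl⟩)⟩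
  rintro _ ⟨l, hl, hl', rfl⟩
  exact mem_cone2_of_smul_eq (sub_pos.2 (Int.cast_lt.2 hij))
    (sub_nonneg.2 (Int.cast_le.2 hl')) (sub_nonneg.2 (Int.cast_le.2 hl)) (key l hl hl')

/-- Collapsing of intermediate exceptional rays between consecutive h-nodes:
for `1 ≤ j ≤ n-1` and `i_j ≤ l ≤ i_{j+1}`,
`(i_{j+1} − i_j)·[h_l] = (i_{j+1} − l)·[h_{i_j}] + (l − i_j)·[h_{i_{j+1}}]`; consequently
the cone generated by `{[h_l] : i_j ≤ l ≤ i_{j+1}}` equals `ℝ≥0⟨[h_{i_j}], [h_{i_{j+1}}]⟩`. -/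
theorem collapsing_intermediate_h_rays
    (n : ℕ) (hn : 4 ≤ n) (i : ℕ → ℤ)
    (hi0 : i 0 = 0)
    (hmono : ∀ k, k < n → i k < i (k + 1))
    (hgcd : Finset.gcd (Finset.Icc 1 n) i = 1)
    (j : ℕ) (hj1 : 1 ≤ j) (hjn : j ≤ n - 1) :
    (∀ l : ℤ, i j ≤ l → l ≤ i (j + 1) →
      ((i (j + 1) : ℝ) - (i j : ℝ)) • Hl n i l
        = ((i (j + 1) : ℝ) - (l : ℝ)) • Hl n i (i j)
          + ((l : ℝ) - (i j : ℝ)) • Hl n i (i (j + 1)))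
    ∧ coneGen {z | ∃ l : ℤ, i j ≤ l ∧ l ≤ i (j + 1) ∧ z = Hl n i l}
        = cone2 (Hl n i (i j)) (Hl n i (i (j + 1))) :=
  collapsing_intermediate_h_rays_general n i hmono j hj1 hjn
end

section
/- Set-theoretic form of the identity Sec¹(C) = C ⊙ Z (Hadamard product): As subsets of ℂ^{n+1}, the image of the secant map on the torus equals the coordinatewise product of the points of the affine cone over the monomial curve with the points of the surface Z, i.e. {(a·s^{i_k} + b·t^{i_k})_{k=0,…,n} : a, b, s, t ∈ ℂ∖{0}} = {(c·u^{i_k}·(ω^{i_k} − λ))_{k=0,…,n} : c, u, ω, λ ∈ ℂ∖{0}}. -/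
/-- Set-theoretic form of `Sec¹(C) = C ⊙ Z` (Hadamard product):
the image of the secant map on the torus equals the coordinatewise product of the
points of the affine cone over the monomial curve with the points of the surface `Z`:
`{(a·s^{i_k} + b·t^{i_k})_k : a,b,s,t ∈ ℂ*} = {(c·u^{i_k}·(ω^{i_k} − λ))_k : c,u,ω,λ ∈ ℂ*}`. -/
theorem secant_equals_hadamard_product
    (n : ℕ) (hn : 4 ≤ n) (i : ℕ → ℤ)
    (hi0 : i 0 = 0)
    (hmono : ∀ k, k < n → i k < i (k + 1))
    (hgcd : Finset.gcd (Finset.Icc 1 n) i = 1) :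
    {f : Fin (n + 1) → ℂ | ∃ a b s t : ℂ, a ≠ 0 ∧ b ≠ 0 ∧ s ≠ 0 ∧ t ≠ 0 ∧
        f = fun k : Fin (n + 1) => a * s ^ (i (k : ℕ)) + b * t ^ (i (k : ℕ))}
      = {f : Fin (n + 1) → ℂ | ∃ c u ω lam : ℂ, c ≠ 0 ∧ u ≠ 0 ∧ ω ≠ 0 ∧ lam ≠ 0 ∧
        f = fun k : Fin (n + 1) => c * u ^ (i (k : ℕ)) * (ω ^ (i (k : ℕ)) - lam)} := by
  ext f
  simp only [Set.mem_setOf_eq]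
  constructor
  · rintro ⟨a, b, s, t, ha, hb, hs, ht, rfl⟩
    refine ⟨a, t, s / t, -b / a, ha, ht, div_ne_zero hs ht,
      div_ne_zero (neg_ne_zero.mpr hb) ha, ?_⟩
    funext k
    rw [div_zpow]
    have hti : (t : ℂ) ^ (i (k : ℕ)) ≠ 0 := zpow_ne_zero _ ht
    field_simp
    ring
  · rintro ⟨c, u, ω, lam, hc, hu, hω, hl, rfl⟩
    refine ⟨c, -c * lam, u * ω, u, hc, by simp [hc, hl], mul_ne_zero hu hω, hu, ?_⟩
    funext k
    rw [mul_zpow]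
    ring
end

section
/- Coprimality of Vandermonde power quotients: Let g, h be positive integers with gcd(g, h) = 1. If P, Q ∈ ℂ[x_0, x_1, x_2, x_3] satisfy V·P = ∏_{0 ≤ p < q ≤ 3} (x_q^g − x_p^g) and V·Q = ∏_{0 ≤ p < q ≤ 3} (x_q^h − x_p^h), then P and Q are relatively prime, i.e. every common divisor of P and Q in ℂ[x_0, x_1, x_2, x_3] is a unit. -/
open MvPolynomial

/-- The Vandermonde polynomial `V = ∏_{0 ≤ p < q ≤ 3} (x_q − x_p)` in `ℂ[x_0,x_1,x_2,x_3]`. -/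
noncomputable def Vand : MvPolynomial (Fin 4) ℂ :=
  ∏ p : Fin 4, ∏ q : Fin 4, if p < q then (X q - X p) else 1

/-- The product `∏_{0 ≤ p < q ≤ 3} (x_q^m − x_p^m)`. -/
noncomputable def vandPow (m : ℕ) : MvPolynomial (Fin 4) ℂ :=
  ∏ p : Fin 4, ∏ q : Fin 4, if p < q then (X q ^ m - X p ^ m) else 1

/-!
Over `ℂ`, `x_q^m - x_p^m = ∏_{ζ^m = 1} (x_q - ζ x_p)`, so the quotient of `vandPow m` by `Vand`
is the product of the linear forms `x_q - ζ x_p` with `p < q`, `ζ^m = 1` and `ζ ≠ 1`. These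
forms are prime, and two of them are associated only if they coincide. A form occurring for
both `g` and `h` would have `ζ^g = ζ^h = 1`, hence `ζ^gcd(g,h) = ζ = 1`, which is excluded.
-/

namespace MvPolynomial

variable {R σ : Type*} [CommRing R]

theorem prime_X_sub_C_mul_X [IsDomain R] (c : R) {i j : σ} (hij : i ≠ j) :
    Prime (X j - C c * X i : MvPolynomial σ R) := by
  classical
  let shear (d : R) : MvPolynomial σ R →ₐ[R] MvPolynomial σ R :=
    aeval (Function.update X j (X j + C d * X i))
  have shear_comp_shear_neg (d : R) : (shear d).comp (shear (-d)) = AlgHom.id R _ := by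
    refine algHom_ext fun k => ?_
    by_cases hk : k = j
    · subst hk
      simp [shear, hij]
    · simp [shear, hk]
  let e : MvPolynomial σ R ≃ₐ[R] MvPolynomial σ R :=
    .ofAlgHom (shear (-c)) (shear c) (by simpa using shear_comp_shear_neg (-c))
      (shear_comp_shear_neg c)
  have he : e (X j) = X j - C c * X i := by simp [e, shear, sub_eq_add_neg]
  rw [← he, MulEquiv.prime_iff]
  exact X_prime

theorem eq_of_X_sub_C_mul_X_dvd [Nontrivial R] [LinearOrder σ] {a b : R} {i j k l : σ}
    (hij : i < j) (hkl : k < l) (hb : b ≠ 0)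
    (h : (X j - C a * X i : MvPolynomial σ R) ∣ X l - C b * X k) : k = i ∧ l = j ∧ b = a := by
  -- Test the vanishing on `x_j = a x_i` at basis vectors and at `x_i = 1`, all other `x = a`.
  have vanish (v : σ → R) (hv : v j = a * v i) : v l = b * v k := by
    obtain ⟨w, hw⟩ := h
    have := congrArg (eval v) hw
    simp only [map_sub, map_mul, eval_X, eval_C, hv, sub_self, zero_mul] at this
    exact sub_eq_zero.mp this
  have hl : l = i ∨ l = j := by
    by_contra! hl
    simpa [Pi.single_apply, hl.1.symm, hl.2.symm, hkl.ne] using vanish (Pi.single l 1)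
  have hk : k = i ∨ k = j := by
    by_contra! hk
    have : 0 = b := by simpa [hk.1.symm, hk.2.symm, hkl.ne'] using vanish (Pi.single k 1)
    exact hb this.symm
  obtain ⟨rfl, rfl⟩ : k = i ∧ l = j := by
    rcases hk with rfl | rfl <;> rcases hl with rfl | rfl <;> simp_all [lt_asymm hij]
  simpa [hij.ne'] using (vanish (Function.update (fun _ => a) k 1) (by simp [hij.ne'])).symm

theorem isRelPrime_X_sub_C_mul_X [IsDomain R] [LinearOrder σ] {a b : R} {i j k l : σ}
    (hij : i < j) (hkl : k < l) (hb : b ≠ 0) (hab : a ≠ b) :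
    IsRelPrime (X j - C a * X i : MvPolynomial σ R) (X l - C b * X k) :=
  (prime_X_sub_C_mul_X a hij.ne).irreducible.isRelPrime_iff_not_dvd.mpr fun h =>
    hab (eq_of_X_sub_C_mul_X_dvd hij hkl hb h).2.2.symm

theorem X_pow_sub_X_pow_eq_prod [IsDomain R] [Infinite R] {ζ : R} {m : ℕ}
    (hζ : IsPrimitiveRoot ζ m) (hm : 0 < m) (i j : σ) :
    (X j ^ m - X i ^ m : MvPolynomial σ R) =
      ∏ μ ∈ Polynomial.nthRootsFinset m (1 : R), (X j - C μ * X i) :=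
  MvPolynomial.funext fun v => by
    simp only [map_sub, map_pow, map_prod, map_mul, eval_X, eval_C]
    exact hζ.pow_sub_pow_eq_prod_sub_mul _ _ hm

end MvPolynomial

namespace Polynomial

theorem eq_one_of_mem_nthRootsFinset_of_gcd_eq_one {R : Type*} [CommRing R] [IsDomain R]
    {g h : ℕ} (hg : 0 < g) (hh : 0 < h) (hgh : g.gcd h = 1) {ζ : R}
    (hζg : ζ ∈ nthRootsFinset g (1 : R)) (hζh : ζ ∈ nthRootsFinset h (1 : R)) : ζ = 1 := by
  rw [mem_nthRootsFinset hg] at hζg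
  rw [mem_nthRootsFinset hh] at hζh
  simpa [hgh] using pow_gcd_eq_one.mpr ⟨hζg, hζh⟩

end Polynomial

noncomputable def vandQuot (σ R : Type*) [Fintype σ] [LinearOrder σ] [CommRing R] [IsDomain R]
    [DecidableEq R] (m : ℕ) : MvPolynomial σ R :=
  ∏ p : σ, ∏ q : σ,
    if p < q then ∏ ζ ∈ (Polynomial.nthRootsFinset m (1 : R)).erase 1, (X q - C ζ * X p) else 1

theorem isRelPrime_vandQuot {σ K : Type*} [Fintype σ] [LinearOrder σ] [Field K] [DecidableEq K]
    {g h : ℕ} (hg : 0 < g) (hh : 0 < h) (hgh : g.gcd h = 1) :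
    IsRelPrime (vandQuot σ K g) (vandQuot σ K h) := by
  refine .prod_left fun p _ => .prod_left fun q _ => ?_
  split_ifs with hpq
  swap
  · exact isRelPrime_one_left
  refine .prod_left fun ζ hζ => .prod_right fun p' _ => .prod_right fun q' _ => ?_
  split_ifs with hpq'
  swap
  · exact isRelPrime_one_right
  refine .prod_right fun ξ hξ => isRelPrime_X_sub_C_mul_X hpq hpq'
    (Polynomial.ne_zero_of_mem_nthRootsFinset one_ne_zero (Finset.mem_of_mem_erase hξ)) ?_
  rintro rfl
  exact Finset.ne_of_mem_erase hζ <| Polynomial.eq_one_of_mem_nthRootsFinset_of_gcd_eq_one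
    hg hh hgh (Finset.mem_of_mem_erase hζ) (Finset.mem_of_mem_erase hξ)

theorem Vand_ne_zero : Vand ≠ 0 :=
  Finset.prod_ne_zero_iff.mpr fun p _ => Finset.prod_ne_zero_iff.mpr fun q _ => by
    split_ifs with hpq
    · exact sub_ne_zero.mpr (X_injective.ne hpq.ne')
    · exact one_ne_zero

theorem Vand_mul_vandQuot {m : ℕ} (hm : 0 < m) : Vand * vandQuot (Fin 4) ℂ m = vandPow m := by
  simp only [Vand, vandQuot, vandPow, ← Finset.prod_mul_distrib]
  refine Finset.prod_congr rfl fun p _ => Finset.prod_congr rfl fun q _ => ?_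
  split_ifs
  · rw [X_pow_sub_X_pow_eq_prod (Complex.isPrimitiveRoot_exp m hm.ne') hm,
      ← Finset.mul_prod_erase _ _ (Polynomial.one_mem_nthRootsFinset hm), map_one, one_mul]
  · exact one_mul 1

/-- Coprimality of Vandermonde power quotients. Let `g, h` be positive
integers with `gcd(g,h) = 1`.  If `V·P = ∏_{p<q}(x_q^g − x_p^g)` and
`V·Q = ∏_{p<q}(x_q^h − x_p^h)`, then `P` and `Q` are relatively prime. -/
theorem vandermonde_power_quotients_coprime
    (g h : ℕ) (hg : 0 < g) (hh : 0 < h) (hgh : Nat.gcd g h = 1)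
    (P Q : MvPolynomial (Fin 4) ℂ)
    (hP : Vand * P = vandPow g)
    (hQ : Vand * Q = vandPow h) :
    IsRelPrime P Q := by
  obtain rfl : P = vandQuot (Fin 4) ℂ g :=
    mul_left_cancel₀ Vand_ne_zero (hP.trans (Vand_mul_vandQuot hg).symm)
  obtain rfl : Q = vandQuot (Fin 4) ℂ h :=
    mul_left_cancel₀ Vand_ne_zero (hQ.trans (Vand_mul_vandQuot hh).symm)
  exact isRelPrime_vandQuot hg hh hgh
end

section
/- Weight of the edge E_{i_j}E_{i_{j+1}} of the tropical secant graph: For every 1 ≤ j ≤ n−2, the gcd of all 4×4 minors of the (n+1)×4 integer matrix with columns E_{i_j}, E_{i_{j+1}}, 𝟏, l₂ equals (i_{j+1} − i_j) · gcd(i_1, …, i_j) · gcd_{j < t < n}(i_n − i_t). (Dividing by the index (i_{j+1} − i_j)·gcd(i_1, …, i_j) of the lattice ℤ⟨E_{i_j}, E_{i_{j+1}}⟩ in its saturation — that index being the gcd of the 2×2 minors of the matrix with rows E_{i_j}, E_{i_{j+1}} — yields the tropical multiplicity m_{E_{i_j}, E_{i_{j+1}}} = gcd(i_1, …, i_j)·gcd_{j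 < t < n}(i_n − i_t).) -/
/-!
Write `D = i_{j+1} - i_j`. Row `k` of the matrix is `c_k · U`, where `U` is an integer matrix
with `det U = D` and `c_k = (i_k - i_j, 0, 1, 0)` for `k ≤ j`, `c_k = (0, 1, 1, i_k - i_n)` for
`k > j`. Hence every 4×4 minor is `D` times a determinant whose first column is divisible by
`gcd(i_1, …, i_j)` and whose last column is divisible by `gcd_{j<t<n}(i_n - i_t)`, and each term
of the Leibniz expansion picks an entry from both columns. Conversely the minor on the rows
`0, k, t, n` is `D · i_k · (i_n - i_t)`. The 2×2 minors are `0` or `±D · i_k` with `k ≤ j`.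
-/

open Matrix

theorem Finset.dvd_mul_gcd_of_forall_dvd_mul {β α : Type*} [CommMonoidWithZero α]
    [NormalizedGCDMonoid α] {s : Finset β} {f : β → α} {a c : α}
    (h : ∀ b ∈ s, a ∣ c * f b) : a ∣ c * s.gcd f :=
  (Finset.dvd_gcd h).trans (Finset.gcd_mul_left' s f c).dvd

theorem Int.finset_gcd_nonneg {β : Type*} (s : Finset β) (f : β → ℤ) : 0 ≤ s.gcd f :=
  Int.nonneg_of_normalize_eq_self Finset.normalize_gcd

theorem Matrix.mul_dvd_det_of_dvd_col {m R : Type*} [Fintype m] [DecidableEq m] [CommRing R]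
    (A : Matrix m m R) {c c' : m} (hc : c ≠ c') {a b : R}
    (ha : ∀ r, a ∣ A r c) (hb : ∀ r, b ∣ A r c') : a * b ∣ A.det := by
  rw [det_apply]
  refine Finset.dvd_sum fun σ _ => ?_
  rw [← Finset.mul_prod_erase _ _ (Finset.mem_univ c),
    ← Finset.mul_prod_erase _ _ (Finset.mem_erase.2 ⟨hc.symm, Finset.mem_univ c'⟩),
    ← mul_assoc, Units.smul_def, zsmul_eq_mul]
  exact dvd_mul_of_dvd_right (dvd_mul_of_dvd_left (mul_dvd_mul (ha _) (hb _)) _) _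

/-- Row `k` of the matrix with columns `E_{i_j}, E_{i_{j+1}}, 𝟏, l₂`. -/
def edgeRow (i : ℕ → ℤ) (j k : ℕ) : Fin 4 → ℤ :=
  ![if k < j then i k else i j, if k < j + 1 then i k else i (j + 1), 1, i k]

def edgeCoords (i : ℕ → ℤ) (j n k : ℕ) : Fin 4 → ℤ :=
  if k ≤ j then ![i k - i j, 0, 1, 0] else ![0, 1, 1, i k - i n]

def edgeTransform (i : ℕ → ℤ) (j n : ℕ) : Matrix (Fin 4) (Fin 4) ℤ :=
  !![1, 1, 0, 1; 0, i (j + 1) - i j, 0, i n - i j; i j, i j, 1, i j; 0, 0, 0, 1]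

section
variable (i : ℕ → ℤ) {j : ℕ} (n : ℕ)

theorem edgeRow_of_le {k : ℕ} (hk : k ≤ j) : edgeRow i j k = ![i k, i k, 1, i k] := by
  rcases hk.lt_or_eq with hk | rfl <;> simp [edgeRow, *]

theorem edgeRow_of_lt {k : ℕ} (hk : j < k) : edgeRow i j k = ![i j, i (j + 1), 1, i k] := by
  simp [edgeRow, hk.not_gt, Nat.not_lt.2 hk]

theorem det_edgeTransform : (edgeTransform i j n).det = i (j + 1) - i j := by
  simp [edgeTransform, det_succ_row_zero, Fin.sum_univ_succ, Fin.succAbove]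

theorem edgeRow_eq_vecMul (k : ℕ) :
    edgeRow i j k = edgeCoords i j n k ᵥ* edgeTransform i j n := by
  rcases le_or_gt k j with hk | hk
  · rw [edgeRow_of_le i hk, edgeCoords, if_pos hk]
    ext c; fin_cases c <;> simp [edgeTransform, vecMul, dotProduct, Fin.sum_univ_four]
  · rw [edgeRow_of_lt i hk, edgeCoords, if_neg hk.not_ge]
    ext c; fin_cases c <;> simp [edgeTransform, vecMul, dotProduct, Fin.sum_univ_four]

end

section
variable {i : ℕ → ℤ} {j n : ℕ}

theorem gcd_Icc_dvd (hi0 : i 0 = 0) {k : ℕ} (hk : k ≤ j) : (Finset.Icc 1 j).gcd i ∣ i k := by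
  rcases k.eq_zero_or_pos with rfl | hk0
  · simp [hi0]
  · exact Finset.gcd_dvd (Finset.mem_Icc.2 ⟨hk0, hk⟩)

theorem gcd_Ioo_dvd {k : ℕ} (hjk : j < k) (hkn : k ≤ n) :
    (Finset.Ioo j n).gcd (fun t => i n - i t) ∣ i k - i n := by
  rcases hkn.lt_or_eq with hkn | rfl
  · exact dvd_sub_comm.1 (Finset.gcd_dvd (Finset.mem_Ioo.2 ⟨hjk, hkn⟩))
  · simp

theorem mul_gcd_dvd_det_edgeRow (hi0 : i 0 = 0) (r : Fin 4 → Fin (n + 1)) :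
    (i (j + 1) - i j) * (Finset.Icc 1 j).gcd i * (Finset.Ioo j n).gcd (fun t => i n - i t) ∣
      (Matrix.of fun s t => edgeRow i j (r s) t).det := by
  have hfactor : (Matrix.of fun s t => edgeRow i j (r s) t)
      = Matrix.of (fun s => edgeCoords i j n (r s)) * edgeTransform i j n := by
    ext s t
    rw [mul_apply_eq_vecMul, of_apply, edgeRow_eq_vecMul i n]; rfl
  rw [hfactor, det_mul, det_edgeTransform, mul_comm (det _), mul_assoc]
  refine mul_dvd_mul_left _ (mul_dvd_det_of_dvd_col _ (c := 0) (c' := 3) (by decide)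
    (fun s => ?_) (fun s => ?_))
  all_goals
    simp only [of_apply, edgeCoords]
    split_ifs with h
  · exact dvd_sub (gcd_Icc_dvd hi0 h) (gcd_Icc_dvd hi0 le_rfl)
  · exact dvd_zero _
  · exact dvd_zero _
  · exact gcd_Ioo_dvd (not_le.1 h) (Nat.lt_succ_iff.1 (r s).2)

theorem det_edgeRow_zero_le_lt_last (hi0 : i 0 = 0) {k t : Fin (n + 1)} (hk : (k : ℕ) ≤ j)
    (ht : j < t) :
    (Matrix.of fun s u => edgeRow i j (![0, k, t, Fin.last n] s : ℕ) u).det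
      = (i (j + 1) - i j) * i k * (i n - i t) := by
  simp [det_succ_row_zero, Fin.sum_univ_succ, Fin.succAbove, hi0, edgeRow_of_le i hk,
    edgeRow_of_le i (Nat.zero_le j), edgeRow_of_lt i ht, edgeRow_of_lt i (ht.trans_le t.is_le)]
  ring

theorem gcd_det_edgeRow (hi0 : i 0 = 0) (hD : i j ≤ i (j + 1)) :
    Finset.univ.gcd
        (fun r : Fin 4 → Fin (n + 1) => (Matrix.of fun s t => edgeRow i j (r s) t).det)
      = (i (j + 1) - i j) * (Finset.Icc 1 j).gcd i * (Finset.Ioo j n).gcd (fun t => i n - i t) := by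
  refine Int.dvd_antisymm (Int.finset_gcd_nonneg _ _)
    (mul_nonneg (mul_nonneg (sub_nonneg.2 hD) (Int.finset_gcd_nonneg _ _))
      (Int.finset_gcd_nonneg _ _)) ?_
    (Finset.dvd_gcd fun r _ => mul_gcd_dvd_det_edgeRow hi0 r)
  refine Finset.dvd_mul_gcd_of_forall_dvd_mul fun t ht => ?_
  obtain ⟨hjt, htn⟩ := Finset.mem_Ioo.1 ht
  rw [mul_right_comm]
  refine Finset.dvd_mul_gcd_of_forall_dvd_mul fun k hk => ?_
  have hkj := (Finset.mem_Icc.1 hk).2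
  rw [mul_right_comm,
    ← det_edgeRow_zero_le_lt_last hi0 (k := ⟨k, by omega⟩) (t := ⟨t, by omega⟩) hkj hjt]
  exact Finset.gcd_dvd (Finset.mem_univ _)

theorem edgeRow_minor_of_le_of_lt {p q : ℕ} (hp : p ≤ j) (hq : j < q) :
    edgeRow i j p 0 * edgeRow i j q 1 - edgeRow i j q 0 * edgeRow i j p 1
      = (i (j + 1) - i j) * i p := by
  simp only [edgeRow_of_le i hp, edgeRow_of_lt i hq, cons_val_zero, cons_val_one]
  ring

theorem mul_gcd_dvd_edgeRow_minor (hi0 : i 0 = 0) (p q : ℕ) :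
    (i (j + 1) - i j) * (Finset.Icc 1 j).gcd i ∣
      edgeRow i j p 0 * edgeRow i j q 1 - edgeRow i j q 0 * edgeRow i j p 1 := by
  rcases le_or_gt p j with hp | hp <;> rcases le_or_gt q j with hq | hq
  · simp [edgeRow_of_le i hp, edgeRow_of_le i hq, mul_comm]
  · exact edgeRow_minor_of_le_of_lt hp hq ▸ mul_dvd_mul_left _ (gcd_Icc_dvd hi0 hp)
  · rw [← dvd_neg, neg_sub, edgeRow_minor_of_le_of_lt hq hp]
    exact mul_dvd_mul_left _ (gcd_Icc_dvd hi0 hq)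
  · simp [edgeRow_of_lt i hp, edgeRow_of_lt i hq, mul_comm]

theorem gcd_edgeRow_minor (hi0 : i 0 = 0) (hD : i j ≤ i (j + 1)) (hjn : j < n) :
    Finset.univ.gcd (fun p : Fin (n + 1) × Fin (n + 1) =>
        edgeRow i j p.1 0 * edgeRow i j p.2 1 - edgeRow i j p.2 0 * edgeRow i j p.1 1)
      = (i (j + 1) - i j) * (Finset.Icc 1 j).gcd i := by
  refine Int.dvd_antisymm (Int.finset_gcd_nonneg _ _)
    (mul_nonneg (sub_nonneg.2 hD) (Int.finset_gcd_nonneg _ _)) ?_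
    (Finset.dvd_gcd fun p _ => mul_gcd_dvd_edgeRow_minor hi0 p.1 p.2)
  refine Finset.dvd_mul_gcd_of_forall_dvd_mul fun k hk => ?_
  have hkj := (Finset.mem_Icc.1 hk).2
  rw [← edgeRow_minor_of_le_of_lt (p := k) hkj hjn]
  exact Finset.gcd_dvd (f := fun p : Fin (n + 1) × Fin (n + 1) =>
        edgeRow i j p.1 0 * edgeRow i j p.2 1 - edgeRow i j p.2 0 * edgeRow i j p.1 1)
    (b := (⟨k, by omega⟩, Fin.last n)) (Finset.mem_univ _)

end

theorem weight_of_edge_EE_general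
    (n : ℕ) (i : ℕ → ℤ)
    (hi0 : i 0 = 0)
    (hmono : ∀ k, k < n → i k < i (k + 1))
    (j : ℕ) (hj1 : 1 ≤ j) (hjn : j ≤ n - 2)
    (M : Fin (n + 1) → Fin 4 → ℤ)
    (hM : M = fun k : Fin (n + 1) =>
      ![if (k : ℕ) < j then i (k : ℕ) else i j,
        if (k : ℕ) < j + 1 then i (k : ℕ) else i (j + 1),
        1, i (k : ℕ)]) :
    Finset.gcd Finset.univ
        (fun r : Fin 4 → Fin (n + 1) => (Matrix.of fun s t => M (r s) t).det)
      = (i (j + 1) - i j) * Finset.gcd (Finset.Icc 1 j) i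
          * Finset.gcd (Finset.Ioo j n) (fun t => i n - i t)
    ∧ Finset.gcd Finset.univ
        (fun p : Fin (n + 1) × Fin (n + 1) => M p.1 0 * M p.2 1 - M p.2 0 * M p.1 1)
      = (i (j + 1) - i j) * Finset.gcd (Finset.Icc 1 j) i := by
  subst hM
  have hjn' : j < n := by omega
  have hD : i j ≤ i (j + 1) := (hmono j hjn').le
  exact ⟨gcd_det_edgeRow hi0 hD, gcd_edgeRow_minor hi0 hD hjn'⟩

/-- Weight of the edge `E_{i_j}E_{i_{j+1}}` of the tropical secant graph.
For `1 ≤ j ≤ n-2`, the gcd of all 4×4 minors of the `(n+1)×4` integer matrix with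
columns `E_{i_j}, E_{i_{j+1}}, 𝟏, l₂` equals
`(i_{j+1} − i_j)·gcd(i_1,…,i_j)·gcd_{j<t<n}(i_n − i_t)`; moreover the gcd of the
2×2 minors of the matrix with rows `E_{i_j}, E_{i_{j+1}}` (the index of the lattice
`ℤ⟨E_{i_j}, E_{i_{j+1}}⟩` in its saturation) equals `(i_{j+1} − i_j)·gcd(i_1,…,i_j)`. -/
theorem weight_of_edge_EE
    (n : ℕ) (hn : 4 ≤ n) (i : ℕ → ℤ)
    (hi0 : i 0 = 0)
    (hmono : ∀ k, k < n → i k < i (k + 1))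
    (hgcd : Finset.gcd (Finset.Icc 1 n) i = 1)
    (j : ℕ) (hj1 : 1 ≤ j) (hjn : j ≤ n - 2)
    (M : Fin (n + 1) → Fin 4 → ℤ)
    (hM : M = fun k : Fin (n + 1) =>
      ![if (k : ℕ) < j then i (k : ℕ) else i j,
        if (k : ℕ) < j + 1 then i (k : ℕ) else i (j + 1),
        1, i (k : ℕ)]) :
    Finset.gcd Finset.univ
        (fun r : Fin 4 → Fin (n + 1) => (Matrix.of fun s t => M (r s) t).det)
      = (i (j + 1) - i j) * Finset.gcd (Finset.Icc 1 j) i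
          * Finset.gcd (Finset.Ioo j n) (fun t => i n - i t)
    ∧ Finset.gcd Finset.univ
        (fun p : Fin (n + 1) × Fin (n + 1) => M p.1 0 * M p.2 1 - M p.2 0 * M p.1 1)
      = (i (j + 1) - i j) * Finset.gcd (Finset.Icc 1 j) i :=
  weight_of_edge_EE_general n i hi0 hmono j hj1 hjn M hM
end

section
/- Partial overlap of the edges F_{i_1,i_2,i_3}D_{i_2} and D_{i_2}E_{i_2} for monomial curves in ℙ^4: If i_1·(i_4 − i_2) = i_2·(i_4 − i_3), then i_2·(i_4 − i_3)·(e_1 + e_2 + e_3) + i_2·(i_3 − i_2)·e_2 = i_4·E_{i_2} − i_2·l₂, and the coefficients i_2(i_4 − i_3), i_2(i_3 − i_2), i_4, i_2 are all positive; hence E_{i_2} lies in the relative interior of the cone spanned by F_{i_1,i_2,i_3} = e_1 + e_2 + e_3 and D_{i_2} = e_2 modulo the line ℝ·l₂. -/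
/-- Partial overlap of the edges `F_{i_1,i_2,i_3}D_{i_2}` and
`D_{i_2}E_{i_2}` for monomial curves in `ℙ⁴`: if `i_1·(i_4 − i_2) = i_2·(i_4 − i_3)`,
then `i_2(i_4 − i_3)·(e_1+e_2+e_3) + i_2(i_3 − i_2)·e_2 = i_4·E_{i_2} − i_2·l₂`, and
the coefficients `i_2(i_4 − i_3)`, `i_2(i_3 − i_2)`, `i_4`, `i_2` are all positive;
hence `E_{i_2}` lies in the relative interior of the cone spanned by
`F_{i_1,i_2,i_3} = e_1+e_2+e_3` and `D_{i_2} = e_2` modulo the line `ℝ·l₂`. -/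
theorem partial_overlap_F123D2_D2E2
    (i1 i2 i3 i4 : ℤ) (h1 : 0 < i1) (h12 : i1 < i2) (h23 : i2 < i3) (h34 : i3 < i4)
    (hyp : i1 * (i4 - i2) = i2 * (i4 - i3)) :
    (i2 * (i4 - i3)) • ![(0 : ℤ), 1, 1, 1, 0] + (i2 * (i3 - i2)) • ![(0 : ℤ), 0, 1, 0, 0]
        = i4 • ![(0 : ℤ), i1, i2, i2, i2] - i2 • ![(0 : ℤ), i1, i2, i3, i4]
    ∧ 0 < i2 * (i4 - i3) ∧ 0 < i2 * (i3 - i2) ∧ 0 < i4 ∧ 0 < i2 := by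
  refine ⟨?_, mul_pos (by linarith) (by linarith), mul_pos (by linarith) (by linarith),
    by linarith, by linarith⟩
  funext i
  fin_cases i <;> simp <;> linarith [hyp]
end

section
/- Internal crossing identity of the second type (case 1) in the construction of the Gröbner tropical secant graph for monomial curves in ℙ^4: (i_3 − i_1)(i_4 − i_3)·E_{i_2} + (i_1(i_4 − i_2) − i_2(i_4 − i_3))·E_{i_3} = (i_4 − i_3)(i_3 − i_2)·( i_1·(e_1 + e_2 + e_3) + (i_2 − i_1)·e_2 ) + i_1(i_3 − i_2)·l₂. (When i_1(i_4 − i_2) ≥ i_2(i_4 − i_3), all coefficients on the left are nonnegative, exhibiting an internal crossing of the cones from the lineality space over the edges E_{i_2}E_{i_3} and F_{i_1,i_2,i_3}D_{i_2}.) -/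
/-- Internal crossing identity of the second type (case 1) in the
construction of the Gröbner tropical secant graph for monomial curves in `ℙ⁴`:
`(i_3 − i_1)(i_4 − i_3)·E_{i_2} + (i_1(i_4 − i_2) − i_2(i_4 − i_3))·E_{i_3}
  = (i_4 − i_3)(i_3 − i_2)·( i_1·(e_1+e_2+e_3) + (i_2 − i_1)·e_2 ) + i_1(i_3 − i_2)·l₂`.
When `i_1(i_4 − i_2) ≥ i_2(i_4 − i_3)` all coefficients on the left are nonnegative. -/
theorem internal_crossing_second_type_case1_P4
    (i1 i2 i3 i4 : ℤ) (h1 : 0 < i1) (h12 : i1 < i2) (h23 : i2 < i3) (h34 : i3 < i4) :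
    ((i3 - i1) * (i4 - i3)) • ![(0 : ℤ), i1, i2, i2, i2]
        + (i1 * (i4 - i2) - i2 * (i4 - i3)) • ![(0 : ℤ), i1, i2, i3, i3]
      = ((i4 - i3) * (i3 - i2)) •
          (i1 • ![(0 : ℤ), 1, 1, 1, 0] + (i2 - i1) • ![(0 : ℤ), 0, 1, 0, 0])
        + (i1 * (i3 - i2)) • ![(0 : ℤ), i1, i2, i3, i4]
    ∧ (i2 * (i4 - i3) ≤ i1 * (i4 - i2) →
        0 ≤ (i3 - i1) * (i4 - i3) ∧ 0 ≤ i1 * (i4 - i2) - i2 * (i4 - i3)) := by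
  constructor
  · funext j
    fin_cases j <;> simp [Fin.isValue, Matrix.cons_val_zero, Matrix.cons_val_one] <;> ring
  · intro h
    exact ⟨mul_nonneg (by linarith) (by linarith), by linarith⟩
end

section
/- The vertices of the first tropical secant complex lie on the rays of the E-nodes: For each 1 ≤ k ≤ n−1, let v^(k) ∈ ℝ^{n+1} be the vector with coordinates v^(k)_j = i_j for 0 ≤ j ≤ k, v^(k)_j = i_k·(i_n − i_j)/(i_n − i_k) for k < j < n, and v^(k)_n = 0. Then (i_n − i_k)·v^(k) = i_n·E_{i_k} − i_k·l₂; in particular v^(k) and E_{i_k} generate the same ray modulo the lineality space ℝ⟨𝟏, l₂⟩, so the first tropical secant complex of the tropicalized monomial curve is the chain subgraph of the tropical secant graph on the nodes E_{i_1}, …, E_{i_{n−1}}. -/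
/-- The vertices of the first tropical secant complex lie on the rays of
the E-nodes.  For `1 ≤ k ≤ n-1`, the vertex `v^{(k)}` of the first tropical secant
complex (with coordinates `v^{(k)}_j = i_j` for `j ≤ k`,
`v^{(k)}_j = i_k(i_n − i_j)/(i_n − i_k)` for `k < j < n`, and `v^{(k)}_n = 0`)
satisfies `(i_n − i_k)·v^{(k)} = i_n·E_{i_k} − i_k·l₂`; in particular `v^{(k)}` and
`E_{i_k}` generate the same ray modulo the lineality space `ℝ⟨𝟏, l₂⟩`. -/
theorem secant_complex_vertices_on_E_rays
    (n : ℕ) (hn : 4 ≤ n) (i : ℕ → ℤ)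
    (hi0 : i 0 = 0)
    (hmono : ∀ a, a < n → i a < i (a + 1))
    (hgcd : Finset.gcd (Finset.Icc 1 n) i = 1)
    (k : ℕ) (hk1 : 1 ≤ k) (hkn : k ≤ n - 1)
    (v : Fin (n + 1) → ℝ)
    (hv : v = fun j : Fin (n + 1) =>
      if (j : ℕ) ≤ k then (i (j : ℕ) : ℝ)
      else if (j : ℕ) < n then
        (i k : ℝ) * ((i n : ℝ) - (i (j : ℕ) : ℝ)) / ((i n : ℝ) - (i k : ℝ))
      else 0) :
    ((i n : ℝ) - (i k : ℝ)) • v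
      = (i n : ℝ) • (fun j : Fin (n + 1) =>
            if (j : ℕ) < k then (i (j : ℕ) : ℝ) else (i k : ℝ))
        - (i k : ℝ) • (fun j : Fin (n + 1) => (i (j : ℕ) : ℝ)) := by
  have hmono' : ∀ b, b ≤ n → ∀ a, a < b → i a < i b := by
    intro b
    induction b with
    | zero => omega
    | succ m ih =>
      intro hb a ha
      rcases Nat.lt_succ_iff_lt_or_eq.mp ha with h | h
      · exact lt_trans (ih (by omega) a h) (hmono m (by omega))
      · subst h; exact hmono a (by omega)
  have hkn' : k < n := by omega
  have hik : (i k : ℝ) < (i n : ℝ) := by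
    exact_mod_cast hmono' n le_rfl k hkn'
  have hne : (i n : ℝ) - (i k : ℝ) ≠ 0 := by linarith
  subst hv
  funext j
  simp only [Pi.smul_apply, Pi.sub_apply, smul_eq_mul]
  by_cases h1 : (j : ℕ) ≤ k
  · rw [if_pos h1]
    by_cases h2 : (j : ℕ) < k
    · rw [if_pos h2]; ring
    · rw [if_neg h2]
      have : (j : ℕ) = k := by omega
      rw [this]; ring
  · rw [if_neg h1, if_neg (by omega : ¬ (j : ℕ) < k)]
    by_cases h2 : (j : ℕ) < n
    · rw [if_pos h2]
      field_simp
    · rw [if_neg h2]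
      have : (j : ℕ) = n := by omega
      rw [this]; ring
end
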